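/- Let g ≥ 2 and n ≥ 1 be integers, and suppose there exist integers g' ≥ 0, s ≥ 0 and e_1,...,e_s ≥ 2 such that (2/n)(g-1) = 2g' - 2 + Σ_{i=1}^s (1 - 1/e_i). Then n ≤ 84(g-1). -/
import Mathlib

private lemma recip_step (c k : ℕ) (hk : 0 < k) (hc : 0 < c)
    (h : (1:ℚ)/c < 1/k) : (1:ℚ)/c ≤ 1/(k+1) := by
  have hkc : k < c := by
    by_contra hcon
    push_neg at hcon
    have : (c:ℚ) ≤ k := by exact_mod_cast hcon
    have : (1:ℚ)/k ≤ 1/c :=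
      one_div_le_one_div_of_le (by exact_mod_cast hc) this
    linarith
  have : (k:ℚ) + 1 ≤ c := by exact_mod_cast hkc
  exact one_div_le_one_div_of_le (by positivity) this

private lemma tri_sorted (a b c : ℕ) (ha : 2 ≤ a) (hb : 2 ≤ b) (hc : 2 ≤ c)
    (hab : a ≤ b) (hbc : b ≤ c)
    (h : (1:ℚ)/a + 1/b + 1/c < 1) : (1:ℚ)/a + 1/b + 1/c ≤ 41/42 := by
  have ha0 : 0 < a := by omega
  have hb0 : 0 < b := by omega
  have hc0 : 0 < c := by omega
  have haq : (2:ℚ) ≤ a := by exact_mod_cast ha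
  have hbq : (a:ℚ) ≤ b := by exact_mod_cast hab
  have hcq : (b:ℚ) ≤ c := by exact_mod_cast hbc
  have h1a : (1:ℚ)/a ≤ 1/2 := one_div_le_one_div_of_le (by norm_num) haq
  have h1b : (1:ℚ)/b ≤ 1/a := one_div_le_one_div_of_le (by positivity) hbq
  have h1c : (1:ℚ)/c ≤ 1/b := one_div_le_one_div_of_le (by positivity) hcq
  rcases le_or_gt 4 a with h4 | h4
  · have : (4:ℚ) ≤ a := by exact_mod_cast h4
    have : (1:ℚ)/a ≤ 1/4 := one_div_le_one_div_of_le (by norm_num) this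
    linarith
  · interval_cases a
    · -- a = 2
      rcases le_or_gt 5 b with h5 | h5
      · have : (5:ℚ) ≤ b := by exact_mod_cast h5
        have : (1:ℚ)/b ≤ 1/5 := one_div_le_one_div_of_le (by norm_num) this
        linarith
      · interval_cases b
        · -- b = 2 : contradiction
          have hcpos : (0:ℚ) < 1/c := by positivity
          norm_num at h
          linarith
        · -- b = 3 : 1/c < 1/6, so c ≥ 7
          have h6 : (1:ℚ)/c < 1/6 := by norm_num at h ⊢; linarith
          have := recip_step c 6 (by norm_num) hc0 h6
          norm_num at this ⊢
          linarith
        · -- b = 4 : 1/c < 1/4, so c ≥ 5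
          have h4c : (1:ℚ)/c < 1/4 := by norm_num at h ⊢; linarith
          have := recip_step c 4 (by norm_num) hc0 h4c
          norm_num at this ⊢
          linarith
    · -- a = 3
      rcases le_or_gt 4 b with h4b | h4b
      · have : (4:ℚ) ≤ b := by exact_mod_cast h4b
        have : (1:ℚ)/b ≤ 1/4 := one_div_le_one_div_of_le (by norm_num) this
        linarith
      · interval_cases b
        · -- b = 3 : 1/c < 1/3, so c ≥ 4
          have h3c : (1:ℚ)/c < 1/3 := by norm_num at h ⊢; linarith
          have := recip_step c 3 (by norm_num) hc0 h3c
          norm_num at this ⊢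
          linarith

private lemma tri (a b c : ℕ) (ha : 2 ≤ a) (hb : 2 ≤ b) (hc : 2 ≤ c)
    (h : (1:ℚ)/a + 1/b + 1/c < 1) : (1:ℚ)/a + 1/b + 1/c ≤ 41/42 := by
  rcases le_total a b with hab | hab <;> rcases le_total b c with hbc | hbc <;>
    rcases le_total a c with hac | hac
  · linarith [tri_sorted a b c ha hb hc hab hbc (by linarith)]
  · linarith [tri_sorted a b c ha hb hc hab hbc (by linarith)]
  · linarith [tri_sorted a c b ha hc hb hac hbc (by linarith)]
  · linarith [tri_sorted c a b hc ha hb hac hab (by linarith)]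
  · linarith [tri_sorted b a c hb ha hc hab hac (by linarith)]
  · linarith [tri_sorted b c a hb hc ha hbc hac (by linarith)]
  · linarith [tri_sorted c b a hc hb ha hbc hab (by linarith)]
  · linarith [tri_sorted c b a hc hb ha hbc hab (by linarith)]

private lemma hurwitz_key (g' s : ℕ) (e : Fin s → ℕ) (he : ∀ i, 2 ≤ e i)
    (hQ : 0 < 2 * (g' : ℚ) - 2 + ∑ i, (1 - 1 / (e i : ℚ))) :
    1/42 ≤ 2 * (g' : ℚ) - 2 + ∑ i, (1 - 1 / (e i : ℚ)) := by
  have he0 : ∀ i, (0:ℚ) < e i := fun i => by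
    have := he i; exact_mod_cast (by omega : 0 < e i)
  have heq2 : ∀ i, (2:ℚ) ≤ e i := fun i => by exact_mod_cast he i
  have hlb : ∀ i, (1/2 : ℚ) ≤ 1 - 1/(e i) := by
    intro i
    have : (1:ℚ)/(e i) ≤ 1/2 := one_div_le_one_div_of_le (by norm_num) (heq2 i)
    linarith
  have hub : ∀ i, (1 - 1/(e i : ℚ)) ≤ 1 := by
    intro i
    have : (0:ℚ) < 1/(e i) := one_div_pos.mpr (he0 i)
    linarith
  have hS_lb : (s:ℚ) * (1/2) ≤ ∑ i, (1 - 1/(e i : ℚ)) := by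
    calc (s:ℚ) * (1/2) = (Finset.univ : Finset (Fin s)).card • (1/2 : ℚ) := by
          simp [nsmul_eq_mul]
      _ ≤ ∑ i, (1 - 1/(e i : ℚ)) :=
          Finset.card_nsmul_le_sum _ _ _ (fun i _ => hlb i)
  match g' with
  | (N+2) =>
    push_cast
    have h1 : (0:ℚ) ≤ N := Nat.cast_nonneg N
    have h2 : (0:ℚ) ≤ s := Nat.cast_nonneg s
    linarith [hS_lb]
  | 1 =>
    push_cast
    rcases Nat.eq_zero_or_pos s with hs | hs
    · subst hs
      simp only [Finset.univ_eq_empty, Finset.sum_empty] at hQ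
      push_cast at hQ
      linarith
    · have : (1:ℚ) ≤ s := by exact_mod_cast hs
      linarith [hS_lb]
  | 0 =>
    push_cast at hQ ⊢
    rcases le_or_gt 5 s with h5 | h5
    · have : (5:ℚ) ≤ s := by exact_mod_cast h5
      linarith [hS_lb]
    · interval_cases s
      · simp only [Finset.univ_eq_empty, Finset.sum_empty] at hQ
        linarith
      · rw [Fin.sum_univ_one] at hQ
        linarith [hub 0]
      · rw [Fin.sum_univ_two] at hQ
        linarith [hub 0, hub 1]
      · rw [Fin.sum_univ_three] at hQ ⊢
        have h1 : (1:ℚ)/(e 0) + 1/(e 1) + 1/(e 2) < 1 := by linarith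
        have := tri (e 0) (e 1) (e 2) (he 0) (he 1) (he 2) h1
        linarith
      · rw [Fin.sum_univ_four] at hQ ⊢
        have step : ∀ k : Fin 4, e k ≠ 2 → (1:ℚ)/(e k) ≤ 1/3 := by
          intro k hk
          have h3k : (3:ℚ) ≤ e k := by
            have := he k
            exact_mod_cast (by omega : 3 ≤ e k)
          exact one_div_le_one_div_of_le (by norm_num) h3k
        have b0 : (1:ℚ)/(e 0) ≤ 1/2 := one_div_le_one_div_of_le (by norm_num) (heq2 0)
        have b1 : (1:ℚ)/(e 1) ≤ 1/2 := one_div_le_one_div_of_le (by norm_num) (heq2 1)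
        have b2 : (1:ℚ)/(e 2) ≤ 1/2 := one_div_le_one_div_of_le (by norm_num) (heq2 2)
        have b3 : (1:ℚ)/(e 3) ≤ 1/2 := one_div_le_one_div_of_le (by norm_num) (heq2 3)
        by_cases h0 : e 0 = 2
        · by_cases h1 : e 1 = 2
          · by_cases h2' : e 2 = 2
            · by_cases h3 : e 3 = 2
              · rw [h0, h1, h2', h3] at hQ
                norm_num at hQ
              · linarith [step 3 h3]
            · linarith [step 2 h2']
          · linarith [step 1 h1]
        · linarith [step 0 h0]

/-- Hurwitz bound: if `(2/n)(g-1) = 2g' - 2 + ∑ (1 - 1/eᵢ)` for some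
`g' ≥ 0`, `s ≥ 0`, `eᵢ ≥ 2`, with `g ≥ 2`, then `n ≤ 84(g-1)`. -/
theorem hurwitz_bound (g n : ℕ) (hg : 2 ≤ g) (hn : 1 ≤ n)
    (h : ∃ (g' s : ℕ) (e : Fin s → ℕ), (∀ i, 2 ≤ e i) ∧
      (2 / (n : ℚ)) * ((g : ℚ) - 1) = 2 * (g' : ℚ) - 2 + ∑ i, (1 - 1 / (e i : ℚ))) :
    n ≤ 84 * (g - 1) := by
  obtain ⟨g', s, e, he, heq⟩ := h
  have hnq : (1:ℚ) ≤ n := by exact_mod_cast hn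
  have hgq : (2:ℚ) ≤ g := by exact_mod_cast hg
  have hnpos : (0:ℚ) < n := by linarith
  have hLpos : 0 < (2 / (n : ℚ)) * ((g : ℚ) - 1) := by
    apply mul_pos (by positivity); linarith
  have hkey := hurwitz_key g' s e he (heq ▸ hLpos)
  rw [← heq] at hkey
  have h1 : (n:ℚ) ≤ 84 * ((g:ℚ) - 1) := by
    rw [div_mul_eq_mul_div, le_div_iff₀ hnpos] at hkey
    linarith
  have h2 : (n:ℚ) ≤ ((84 * (g - 1) : ℕ) : ℚ) := by
    push_cast [Nat.cast_sub (by omega : 1 ≤ g)]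
    linarith
  exact_mod_cast h2
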